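/- Let b, c : ℝ → ℝ be smooth, let m₁, m₂, m₃ ∈ ℝ satisfy m₁ = m₃² − m₂², and define m(y) = m₁·y + m₂·B(y) + m₃·C(y). Then for every smooth function u : ℝ² → ℝ (not necessarily a solution), the identity exp(m₃x + m₂t)·F[u] = ∂ₜ[ exp(m₃x + m₂t)·(∂ₜu − m₂·u + B(u)) ] + ∂ₓ[ exp(m₃x + m₂t)·(m₃·u − ∂ₓu + C(u)) ] holds on ℝ². In particular, exp(m₃x + m₂t) is a conservation law multiplier, and on every solution of F[u] = 0 the displayed current is divergence-free. -/

import Mathlib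

/-! Differentiating the weight exp(m₃x + m₂t) contributes m₂ times the time current and m₃ times
the space current. The terms m₂∂ₜu and −m₃∂ₓu this produces cancel against the derivatives of −m₂u
and m₃u in the currents, the chain rule turns B(u) and C(u) into b(u)∂ₜu and c(u)∂ₓu, and the
zero-order terms add up to (m₃² − m₂²)u + m₂B(u) + m₃C(u) = m(u). -/

noncomputable section

open Real

/-- Partial derivative in the first (time) variable. -/
def Dt (u : ℝ → ℝ → ℝ) : ℝ → ℝ → ℝ := fun t x => deriv (fun s => u s x) t

/-- Partial derivative in the second (space) variable. -/
def Dx (u : ℝ → ℝ → ℝ) : ℝ → ℝ → ℝ := fun t x => deriv (fun s => u t s) x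

/-- Smoothness (C^∞) of a function of two real variables. -/
def Smooth2 (u : ℝ → ℝ → ℝ) : Prop := ContDiff ℝ (⊤ : ℕ∞) (fun p : ℝ × ℝ => u p.1 p.2)
/-- The semilinear wave operator F[u] = ∂ₜ²u − ∂ₓ²u + b(u)∂ₜu + c(u)∂ₓu + m(u). -/
def Fop (b c m : ℝ → ℝ) (u : ℝ → ℝ → ℝ) : ℝ → ℝ → ℝ := fun t x =>
  Dt (Dt u) t x - Dx (Dx u) t x + b (u t x) * Dt u t x + c (u t x) * Dx u t x + m (u t x)

/-- The adjoint linearized operator along u: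
L*[u]q = ∂ₜ²q − ∂ₓ²q − b(u)∂ₜq − c(u)∂ₓq + m′(u)q. -/
def Lstar (b c m : ℝ → ℝ) (u q : ℝ → ℝ → ℝ) : ℝ → ℝ → ℝ := fun t x =>
  Dt (Dt q) t x - Dx (Dx q) t x - b (u t x) * Dt q t x - c (u t x) * Dx q t x
    + deriv m (u t x) * q t x

lemma hasDerivAt_of_eq_integral {f F : ℝ → ℝ} (hf : Continuous f)
    (hF : ∀ y, F y = ∫ s in (0:ℝ)..y, f s) (y : ℝ) : HasDerivAt F (f y) y := by
  obtain rfl : F = fun z => ∫ s in (0:ℝ)..z, f s := funext hF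
  exact (hf.integral_hasStrictDerivAt 0 y).hasDerivAt

namespace Smooth2

variable {u : ℝ → ℝ → ℝ} (hu : Smooth2 u)
include hu

lemma differentiableAt (p : ℝ × ℝ) : DifferentiableAt ℝ (fun p : ℝ × ℝ => u p.1 p.2) p :=
  ContDiff.differentiable hu (by simp) p

lemma hasDerivAt_fderiv_fst (t x : ℝ) :
    HasDerivAt (fun s => u s x) (fderiv ℝ (fun p : ℝ × ℝ => u p.1 p.2) (t, x) (1, 0)) t :=
  (hu.differentiableAt (t, x)).hasFDerivAt.comp_hasDerivAt (l := fun p : ℝ × ℝ => u p.1 p.2) t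
    ((hasDerivAt_id t).prodMk (hasDerivAt_const t x))

lemma hasDerivAt_fderiv_snd (t x : ℝ) :
    HasDerivAt (fun s => u t s) (fderiv ℝ (fun p : ℝ × ℝ => u p.1 p.2) (t, x) (0, 1)) x :=
  (hu.differentiableAt (t, x)).hasFDerivAt.comp_hasDerivAt (l := fun p : ℝ × ℝ => u p.1 p.2) x
    ((hasDerivAt_const x t).prodMk (hasDerivAt_id x))

lemma Dt_eq_fderiv : Dt u = fun t x => fderiv ℝ (fun p : ℝ × ℝ => u p.1 p.2) (t, x) (1, 0) := by
  funext t x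
  exact (hu.hasDerivAt_fderiv_fst t x).deriv

lemma Dx_eq_fderiv : Dx u = fun t x => fderiv ℝ (fun p : ℝ × ℝ => u p.1 p.2) (t, x) (0, 1) := by
  funext t x
  exact (hu.hasDerivAt_fderiv_snd t x).deriv

lemma hasDerivAt_Dt (t x : ℝ) : HasDerivAt (fun s => u s x) (Dt u t x) t := by
  rw [hu.Dt_eq_fderiv]
  exact hu.hasDerivAt_fderiv_fst t x

lemma hasDerivAt_Dx (t x : ℝ) : HasDerivAt (fun s => u t s) (Dx u t x) x := by
  rw [hu.Dx_eq_fderiv]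
  exact hu.hasDerivAt_fderiv_snd t x

lemma Dt : Smooth2 (Dt u) := by
  rw [Smooth2, hu.Dt_eq_fderiv]
  exact (hu.fderiv_right (by simp)).clm_apply contDiff_const

lemma Dx : Smooth2 (Dx u) := by
  rw [Smooth2, hu.Dx_eq_fderiv]
  exact (hu.fderiv_right (by simp)).clm_apply contDiff_const

end Smooth2

lemma Dt_exp_mul_timeCurrent {u : ℝ → ℝ → ℝ} (hu : Smooth2 u) {b B : ℝ → ℝ}
    (hB : ∀ y, HasDerivAt B (b y) y) (m₂ m₃ t x : ℝ) :
    Dt (fun t x => exp (m₃ * x + m₂ * t) * (Dt u t x - m₂ * u t x + B (u t x))) t x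
      = exp (m₃ * x + m₂ * t) * (Dt (Dt u) t x + b (u t x) * Dt u t x
          - m₂ ^ 2 * u t x + m₂ * B (u t x)) := by
  have hweight := ((hasDerivAt_const_mul m₂).const_add (m₃ * x)).exp (x := t)
  have hcurrent := (hu.Dt.hasDerivAt_Dt t x).sub ((hu.hasDerivAt_Dt t x).const_mul m₂)
    |>.add ((hB _).comp t (hu.hasDerivAt_Dt t x))
  refine (hweight.mul hcurrent).deriv.trans ?_
  simp only [Pi.add_apply, Pi.sub_apply, Function.comp_apply]
  ring

lemma Dx_exp_mul_spaceCurrent {u : ℝ → ℝ → ℝ} (hu : Smooth2 u) {c C : ℝ → ℝ}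
    (hC : ∀ y, HasDerivAt C (c y) y) (m₂ m₃ t x : ℝ) :
    Dx (fun t x => exp (m₃ * x + m₂ * t) * (m₃ * u t x - Dx u t x + C (u t x))) t x
      = exp (m₃ * x + m₂ * t) * (- Dx (Dx u) t x + c (u t x) * Dx u t x
          + m₃ ^ 2 * u t x + m₃ * C (u t x)) := by
  have hweight := ((hasDerivAt_const_mul m₃).add_const (m₂ * t)).exp (x := x)
  have hcurrent := ((hu.hasDerivAt_Dx t x).const_mul m₃).sub (hu.Dx.hasDerivAt_Dx t x)
    |>.add ((hC _).comp x (hu.hasDerivAt_Dx t x))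
  refine (hweight.mul hcurrent).deriv.trans ?_
  simp only [Pi.add_apply, Pi.sub_apply, Function.comp_apply]
  ring

lemma exp_mul_Fop_eq_divergence {b c m B C : ℝ → ℝ} {m₁ m₂ m₃ : ℝ}
    (hm₁ : m₁ = m₃ ^ 2 - m₂ ^ 2) (hm : ∀ y, m y = m₁ * y + m₂ * B y + m₃ * C y)
    (hB : ∀ y, HasDerivAt B (b y) y) (hC : ∀ y, HasDerivAt C (c y) y)
    {u : ℝ → ℝ → ℝ} (hu : Smooth2 u) (t x : ℝ) :
    exp (m₃ * x + m₂ * t) * Fop b c m u t x =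
      Dt (fun t x => exp (m₃ * x + m₂ * t) * (Dt u t x - m₂ * u t x + B (u t x))) t x
      + Dx (fun t x => exp (m₃ * x + m₂ * t) * (m₃ * u t x - Dx u t x + C (u t x))) t x := by
  rw [Dt_exp_mul_timeCurrent hu hB, Dx_exp_mul_spaceCurrent hu hC, Fop, hm, hm₁]
  ring

/-- exp(m₃x + m₂t) is a conservation law multiplier of the semilinear wave
equation with m = m₁u + m₂∫b + m₃∫c, m₁ = m₃² − m₂². -/
theorem stmt_6
    (b c : ℝ → ℝ) (hb : ContDiff ℝ (⊤ : ℕ∞) b) (hc : ContDiff ℝ (⊤ : ℕ∞) c)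
    (m₁ m₂ m₃ : ℝ) (hm₁ : m₁ = m₃ ^ 2 - m₂ ^ 2)
    (m B C : ℝ → ℝ)
    (hB : ∀ y, B y = ∫ s in (0:ℝ)..y, b s)
    (hC : ∀ y, C y = ∫ s in (0:ℝ)..y, c s)
    (hmdef : ∀ y, m y = m₁ * y + m₂ * B y + m₃ * C y)
    (u : ℝ → ℝ → ℝ) (hu : Smooth2 u) :
    (∀ t x : ℝ,
      Real.exp (m₃ * x + m₂ * t) * Fop b c m u t x =
        Dt (fun t x => Real.exp (m₃ * x + m₂ * t) * (Dt u t x - m₂ * u t x + B (u t x))) t x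
        + Dx (fun t x => Real.exp (m₃ * x + m₂ * t) * (m₃ * u t x - Dx u t x + C (u t x))) t x)
    ∧ ((∀ t x, Fop b c m u t x = 0) →
      ∀ t x : ℝ,
        Dt (fun t x => Real.exp (m₃ * x + m₂ * t) * (Dt u t x - m₂ * u t x + B (u t x))) t x
        + Dx (fun t x => Real.exp (m₃ * x + m₂ * t) * (m₃ * u t x - Dx u t x + C (u t x))) t x
          = 0) := by
  have identity := exp_mul_Fop_eq_divergence hm₁ hmdef
    (hasDerivAt_of_eq_integral hb.continuous hB) (hasDerivAt_of_eq_integral hc.continuous hC) hu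
  exact ⟨identity, fun hsol t x => by rw [← identity, hsol, mul_zero]⟩
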